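/- Under conjunctivity, c ; c^ω ; d = c ; c^* ; d ⊓ c^∞ for all commands c, d. -/

import Mathlib

/-- A Concurrent Refinement Algebra over a complete distributive lattice of
commands, ordered by refinement (`⊓` = nondeterministic choice, `⊥` = abort,
`⊤` = magic), with sequential composition `seq` (identity `nil`),
synchronous parallel `par`, weak conjunction `conj`, a Boolean-style
sub-lattice of atomic steps `Atomic` (with `eps` the environment-step identity
of `par`) and a sub-lattice of tests `Test`. -/
structure CRA (C : Type*) [CompleteDistribLattice C] where
  seq : C → C → C
  par : C → C → C
  conj : C → C → C
  nil : C
  eps : C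
  Atomic : C → Prop
  Test : C → Prop
  seq_assoc : ∀ a b c, seq (seq a b) c = seq a (seq b c)
  seq_nil : ∀ c, seq c nil = c
  nil_seq : ∀ c, seq nil c = c
  seq_mono_left : ∀ d : C, Monotone fun c => seq c d
  seq_mono_right : ∀ c : C, Monotone (seq c)
  top_seq : ∀ c, seq ⊤ c = ⊤
  bot_seq : ∀ c, seq ⊥ c = ⊥
  /-- sequential composition distributes over arbitrary choices on the right -/
  seq_sInf_distrib : ∀ (S : Set C) (d : C), seq (sInf S) d = ⨅ c ∈ S, seq c d
  par_assoc : ∀ a b c, par (par a b) c = par a (par b c)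
  par_comm : ∀ a b, par a b = par b a
  /-- parallel distributes over arbitrary choices -/
  par_sInf_distrib : ∀ (c : C) (S : Set C), par c (sInf S) = ⨅ d ∈ S, par c d
  nil_par_nil : par nil nil = nil
  atomic_par : ∀ a b, Atomic a → Atomic b → Atomic (par a b)
  /-- synchronous interchange law for atomic steps -/
  interchange : ∀ a b c d, Atomic a → Atomic b →
    par (seq a c) (seq b d) = seq (par a b) (par c d)
  par_atomic_seq_nil : ∀ a c, Atomic a → par (seq a c) nil = ⊤
  atomic_eps : Atomic eps
  /-- `eps` is the identity of parallel on atomic steps -/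
  eps_par_atomic : ∀ a, Atomic a → par eps a = a
  conj_assoc : ∀ a b c, conj (conj a b) c = conj a (conj b c)
  conj_comm : ∀ a b, conj a b = conj b a
  conj_idem : ∀ a, conj a a = a
  conj_bot : ∀ c, conj c ⊥ = ⊥
  conj_atomic : ∀ a b, Atomic a → Atomic b → conj a b = a ⊔ b
  conj_test : ∀ t t', Test t → Test t' → conj t t' = t ⊔ t'
  conj_interchange : ∀ a b c d, Atomic a → Atomic b →
    conj (seq a c) (seq b d) = seq (conj a b) (conj c d)
  conj_atomic_seq_nil : ∀ a c, Atomic a → conj (seq a c) nil = ⊤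
  conj_sInf_distrib : ∀ (c : C) (S : Set C), S.Nonempty →
    conj c (sInf S) = ⨅ d ∈ S, conj c d
  atomic_conj : ∀ a b, Atomic a → Atomic b → Atomic (conj a b)
  test_nil : Test nil
  test_nil_le : ∀ t, Test t → nil ≤ t
  test_seq_par_interchange : ∀ t t' c d, Test t → Test t' →
    par (seq t c) (seq t' d) = seq (t ⊔ t') (par c d)
  conj_test_interchange : ∀ t t' c d, Test t → Test t' →
    conj (seq t c) (seq t' d) = seq (t ⊔ t') (conj c d)

namespace CRA

variable {C : Type*} [CompleteDistribLattice C] (A : CRA C)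

/-- possibly infinite iteration `c^ω = μ x. nil ⊓ c;x` -/
def omega (c : C) : C :=
  OrderHom.lfp ⟨fun x => A.nil ⊓ A.seq c x,
    fun _ _ h => inf_le_inf_left _ (A.seq_mono_right c h)⟩

/-- finite iteration `c^* = ν x. nil ⊓ c;x` -/
def star (c : C) : C :=
  OrderHom.gfp ⟨fun x => A.nil ⊓ A.seq c x,
    fun _ _ h => inf_le_inf_left _ (A.seq_mono_right c h)⟩

/-- infinite iteration `c^∞ = c^ω ; ⊤` -/
def inft (c : C) : C := A.seq (A.omega c) ⊤

/-- finite powers: `c^0 = nil`, `c^(i+1) = c ; c^i` -/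
def pow (c : C) : ℕ → C
  | 0 => A.nil
  | n + 1 => A.seq c (pow c n)

end CRA

/-!
Let `θ = seqLfp c = μ x. c ; x`. Induction gives `θ ; e = θ` for every `e`, and, for conjunctive `c`,
`c^ω = c^* ⊓ θ`: the right side is a pre-fixed point of `x ↦ nil ⊓ c ; x`, and induction on `θ`
shows `θ ≤ c^* ⇨ c^ω`. Since `θ ≤ c^* ; ⊤`, it follows that `c^∞ = c^ω ; ⊤ = θ`, so
`c^ω ; d = c^* ; d ⊓ c^∞`. Prefixing `c` and using conjunctivity once more together with
`c ; c^∞ = c^∞` gives the theorem.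
-/

namespace CRA

variable {C : Type*} [CompleteDistribLattice C] (A : CRA C)

theorem inf_seq (x y e : C) : A.seq (x ⊓ y) e = A.seq x e ⊓ A.seq y e := by
  simpa only [sInf_pair, iInf_pair] using A.seq_sInf_distrib {x, y} e

def iterStep (c : C) : C →o C :=
  ⟨fun x => A.nil ⊓ A.seq c x, fun _ _ h => inf_le_inf_left _ (A.seq_mono_right c h)⟩

theorem omega_unfold (c : C) : A.nil ⊓ A.seq c (A.omega c) = A.omega c :=
  (A.iterStep c).map_lfp

theorem star_unfold (c : C) : A.nil ⊓ A.seq c (A.star c) = A.star c :=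
  (A.iterStep c).map_gfp

theorem omega_le {c x : C} (h : A.nil ⊓ A.seq c x ≤ x) : A.omega c ≤ x :=
  (A.iterStep c).lfp_le h

theorem seq_inft (c : C) : A.seq c (A.inft c) = A.inft c := by
  conv_rhs => rw [inft, ← omega_unfold]
  rw [inf_seq, A.nil_seq, top_inf_eq, A.seq_assoc, inft]

def seqLfp (c : C) : C :=
  OrderHom.lfp ⟨A.seq c, A.seq_mono_right c⟩

theorem seq_seqLfp (c : C) : A.seq c (A.seqLfp c) = A.seqLfp c :=
  OrderHom.map_lfp ⟨A.seq c, A.seq_mono_right c⟩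

theorem seqLfp_le {c x : C} (h : A.seq c x ≤ x) : A.seqLfp c ≤ x :=
  OrderHom.lfp_le _ h

theorem seqLfp_seq (c e : C) : A.seq (A.seqLfp c) e = A.seqLfp c := by
  have hbot : A.seq (A.seqLfp c) ⊥ = A.seqLfp c := by
    refine le_antisymm ?_ (A.seqLfp_le ?_)
    · calc A.seq (A.seqLfp c) ⊥ ≤ A.seq (A.seqLfp c) A.nil := A.seq_mono_right _ bot_le
        _ = A.seqLfp c := A.seq_nil _
    · rw [← A.seq_assoc, seq_seqLfp]
  rw [← hbot, A.seq_assoc, A.bot_seq]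

theorem seqLfp_le_star_seq_top (c : C) : A.seqLfp c ≤ A.seq (A.star c) ⊤ := by
  refine A.seqLfp_le (le_of_eq ?_)
  conv_rhs => rw [← star_unfold]
  rw [inf_seq, A.nil_seq, top_inf_eq, A.seq_assoc]

variable {A}

theorem omega_eq_star_inf_seqLfp {c : C}
    (hc : ∀ x y, A.seq c (x ⊓ y) = A.seq c x ⊓ A.seq c y) :
    A.omega c = A.star c ⊓ A.seqLfp c := by
  refine le_antisymm (A.omega_le ?_) ?_
  · rw [hc, seq_seqLfp, ← inf_assoc, star_unfold]
  · have hθ : A.seqLfp c ≤ A.star c ⇨ A.omega c := by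
      refine A.seqLfp_le (le_himp_iff.mpr ?_)
      calc A.seq c (A.star c ⇨ A.omega c) ⊓ A.star c
          = A.nil ⊓ A.seq c ((A.star c ⇨ A.omega c) ⊓ A.star c) := by
            rw [hc, ← star_unfold, ← inf_assoc, inf_comm (A.seq c _), inf_assoc, star_unfold]
        _ ≤ A.nil ⊓ A.seq c (A.omega c) :=
            inf_le_inf_left _ (A.seq_mono_right c himp_inf_le)
        _ = A.omega c := A.omega_unfold c
    exact le_himp_iff'.mp hθ

theorem inft_eq_seqLfp {c : C} (hc : ∀ x y, A.seq c (x ⊓ y) = A.seq c x ⊓ A.seq c y) :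
    A.inft c = A.seqLfp c := by
  rw [inft, omega_eq_star_inf_seqLfp hc, inf_seq, seqLfp_seq]
  exact inf_eq_right.mpr (A.seqLfp_le_star_seq_top c)

theorem omega_seq {c : C} (hc : ∀ x y, A.seq c (x ⊓ y) = A.seq c x ⊓ A.seq c y) (d : C) :
    A.seq (A.omega c) d = A.seq (A.star c) d ⊓ A.inft c := by
  rw [omega_eq_star_inf_seqLfp hc, inf_seq, seqLfp_seq, inft_eq_seqLfp hc]

end CRA

theorem seq_omega_seq {C : Type*} [CompleteDistribLattice C] (A : CRA C)
    (hconj : ∀ (c : C) (S : Set C), S.Nonempty → A.seq c (sInf S) = ⨅ d ∈ S, A.seq c d) (c d : C) :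
    A.seq c (A.seq (A.omega c) d) = A.seq c (A.seq (A.star c) d) ⊓ A.inft c := by
  have hc : ∀ x y, A.seq c (x ⊓ y) = A.seq c x ⊓ A.seq c y := fun x y => by
    simpa only [sInf_pair, iInf_pair] using hconj c {x, y} (Set.insert_nonempty x {y})
  rw [CRA.omega_seq hc, hc, A.seq_inft]
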